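/- For every k ≥ 1, the sequence (c(n+k-1, k))_{n≥1} of unsigned Stirling numbers of the first kind is not almost realizable: for every positive integer C there exists n ≥ 1 such that n does not divide C·∑_{d|n} μ(n/d) c(d+k-1, k). -/
import Mathlib


/-- A sequence `a : ℕ → ℕ` (indexed from 1) is realizable if there is a set `X`
and a map `T : X → X` such that for every `n ≥ 1` the set of points fixed by the
`n`-th iterate of `T` is finite with cardinality `a n`. -/
def IsRealizable (a : ℕ → ℕ) : Prop :=
  ∃ (X : Type) (T : X → X), ∀ n : ℕ, 1 ≤ n →
    {x : X | T^[n] x = x}.Finite ∧ {x : X | T^[n] x = x}.ncard = a n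

/-- The Möbius-transformed sum `∑_{d ∣ n} μ(n/d) a_d`. -/
def doldSum (a : ℕ → ℕ) (n : ℕ) : ℤ :=
  ∑ d ∈ n.divisors, (ArithmeticFunction.moebius (n / d) : ℤ) * (a d : ℤ)

/-- Unsigned Stirling numbers of the first kind: `stirling1 n k` counts the
permutations of an `n`-element set with exactly `k` cycles. -/
def stirling1 : ℕ → ℕ → ℕ
  | 0, 0 => 1
  | 0, _ + 1 => 0
  | _ + 1, 0 => 0
  | n + 1, k + 1 => n * stirling1 n (k + 1) + stirling1 n k

open Polynomial


lemma stirling1_coeff (n : ℕ) : ∀ k : ℕ, (ascPochhammer ℕ n).coeff k = stirling1 n k := by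
  induction n with
  | zero =>
    intro k
    cases k with
    | zero => simp [ascPochhammer_zero, stirling1]
    | succ k => simp [ascPochhammer_zero, stirling1, coeff_one]
  | succ n ih =>
    intro k
    rw [ascPochhammer_succ_right]
    have hC : ((n : ℕ[X])) = C (n : ℕ) := by simp
    rw [hC, mul_add, coeff_add, mul_comm (ascPochhammer ℕ n) (C (n:ℕ)), coeff_C_mul]
    cases k with
    | zero =>
      rw [coeff_mul_X_zero]
      cases n with
      | zero => simp [stirling1, ascPochhammer_zero]
      | succ m => simp [stirling1, ih, show stirling1 (m+1) 0 = 0 from rfl]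
    | succ k =>
      rw [coeff_mul_X, ih, ih]
      show stirling1 n k + n * stirling1 n (k+1) = stirling1 (n+1) (k+1)
      rw [stirling1]
      ring

lemma ascPochhammer_eq_prod (S : Type*) [CommSemiring S] (n : ℕ) :
    ascPochhammer S n = ∏ i ∈ Finset.range n, (X + C (i : S)) := by
  induction n with
  | zero => simp [ascPochhammer_zero]
  | succ n ih =>
    rw [ascPochhammer_succ_right, ih, Finset.prod_range_succ]
    simp

lemma ascPochhammer_zmod (p : ℕ) [hp : Fact p.Prime] :
    ascPochhammer (ZMod p) p = X ^ p - X := by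
  have h1 : (X ^ p - X : (ZMod p)[X]).Monic := by
    apply monic_X_pow_sub
    calc degree (X : (ZMod p)[X]) ≤ 1 := degree_X_le
    _ < (p : WithBot ℕ) := by exact_mod_cast Nat.cast_lt.mpr hp.out.one_lt
  have hroots : (X ^ p - X : (ZMod p)[X]).roots = Finset.univ.val := by
    have := FiniteField.roots_X_pow_card_sub_X (K := ZMod p)
    rwa [ZMod.card] at this
  have hdeg : (X ^ p - X : (ZMod p)[X]).natDegree = p :=
    FiniteField.X_pow_card_sub_X_natDegree_eq _ hp.out.one_lt
  have hcard : Multiset.card (X ^ p - X : (ZMod p)[X]).roots = (X ^ p - X : (ZMod p)[X]).natDegree := by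
    rw [hroots, hdeg]; simp [ZMod.card]
  have hfact := prod_multiset_X_sub_C_of_monic_of_roots_card_eq h1 hcard
  rw [hroots] at hfact
  rw [ascPochhammer_eq_prod, ← hfact]
  rw [show (Finset.univ.val.map fun a : ZMod p => X - C a).prod
      = ∏ a : ZMod p, (X - C a) from rfl]
  rw [← Equiv.prod_comp (Equiv.neg (ZMod p)) (fun a => X - C a)]
  simp only [Equiv.neg_apply, map_neg, sub_neg_eq_add]
  -- now: ∏ i in range p, (X + C i) = ∏ a : ZMod p, (X + C a)
  refine Finset.prod_nbij (fun i => (i : ZMod p)) ?_ ?_ ?_ ?_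
  · intro a _; exact Finset.mem_univ _
  · intro a ha b hb hab
    simp only [Finset.mem_coe, Finset.mem_range] at ha hb
    have h1 := ZMod.val_cast_of_lt ha
    have h2 := ZMod.val_cast_of_lt hb
    simp only at hab
    have h3 := congrArg ZMod.val hab
    rwa [h1, h2] at h3
  · intro b _
    exact ⟨(b.val), by simpa [Finset.mem_range] using ZMod.val_lt b, by simp⟩
  · intro a _; rfl

lemma stirling1_self (k : ℕ) : stirling1 k k = 1 := by
  induction k with
  | zero => rfl
  | succ k ih =>
    show k * stirling1 k (k + 1) + stirling1 k k = 1
    have hz : stirling1 k (k+1) = 0 := by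
      have : (ascPochhammer ℕ k).coeff (k+1) = 0 := by
        apply coeff_eq_zero_of_natDegree_lt
        rw [ascPochhammer_natDegree]; omega
      rw [stirling1_coeff] at this
      exact this
    rw [hz, ih]; ring

lemma stirling1_key (p k : ℕ) [hp : Fact p.Prime] (hk : 1 ≤ k) (hkp : k < p) :
    ((stirling1 (p + k - 1) k : ℕ) : ZMod p) = -1 := by
  have hmap : (ascPochhammer (ZMod p) (p + (k - 1))).coeff k
      = ((stirling1 (p + k - 1) k : ℕ) : ZMod p) := by
    have hpk : p + (k - 1) = p + k - 1 := by omega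
    rw [hpk, ← ascPochhammer_map (Nat.castRingHom (ZMod p)), coeff_map, stirling1_coeff]
    rfl
  rw [← hmap]
  have hmul : ascPochhammer (ZMod p) (p + (k-1))
      = ascPochhammer (ZMod p) p * (ascPochhammer (ZMod p) (k-1)).comp (X + (p : (ZMod p)[X])) :=
    (ascPochhammer_mul (ZMod p) p (k-1)).symm
  have hzero : ((p : (ZMod p)[X])) = 0 := by
    simp [ZMod.natCast_self]
  rw [hmul, hzero, add_zero, comp_X, ascPochhammer_zmod]
  set Q := ascPochhammer (ZMod p) (k-1) with hQ
  have : (X ^ p - X) * Q = Q * X ^ p - Q * X := by ring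
  rw [this, coeff_sub, coeff_mul_X_pow', if_neg (by omega)]
  obtain ⟨m, hm⟩ : ∃ m, k = m + 1 := ⟨k - 1, by omega⟩
  rw [hm, coeff_mul_X]
  have hmonic : Q.Monic := monic_ascPochhammer _ _
  have hdeg : Q.natDegree = k - 1 := ascPochhammer_natDegree _ _
  rw [show m = Q.natDegree by omega]
  rw [hmonic.coeff_natDegree]
  ring

lemma doldSum_prime (a : ℕ → ℕ) (p : ℕ) (hp : p.Prime) :
    doldSum a p = (a p : ℤ) - (a 1 : ℤ) := by
  rw [doldSum, hp.divisors]
  rw [Finset.sum_pair hp.one_lt.ne]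
  rw [Nat.div_one, Nat.div_self hp.pos]
  rw [ArithmeticFunction.moebius_apply_prime hp, ArithmeticFunction.moebius_apply_one]
  ring


theorem stirling1_not_almost_realizable (k : ℕ) (hk : 1 ≤ k) :
    ∀ C : ℕ, 0 < C → ∃ n : ℕ, 1 ≤ n ∧
      ¬ (n : ℤ) ∣ (C : ℤ) * doldSum (fun m => stirling1 (m + k - 1) k) n := by
  intro C hC
  obtain ⟨p, hple, hp⟩ := Nat.exists_infinite_primes (max (2 * C) k + 1)
  haveI : Fact p.Prime := ⟨hp⟩
  refine ⟨p, hp.one_lt.le, ?_⟩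
  intro hdvd
  rw [doldSum_prime _ p hp] at hdvd
  have hkp : k < p := by omega
  have h1 : stirling1 (1 + k - 1) k = 1 := by
    rw [show 1 + k - 1 = k by omega, stirling1_self]
  rw [h1] at hdvd
  have hz : (((C : ℤ) * ((stirling1 (p + k - 1) k : ℤ) - (1 : ℤ))) : ZMod p) = 0 := by
    exact_mod_cast (ZMod.intCast_zmod_eq_zero_iff_dvd _ p).mpr hdvd
  push_cast at hz
  rw [show ((stirling1 (p + k - 1) k : ℕ) : ZMod p) = -1 from stirling1_key p k hk hkp] at hz
  have h2 : ((2 * C : ℕ) : ZMod p) = 0 := by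
    push_cast
    have : (-(C : ZMod p)) - C = -(2*C) := by ring
    calc ((2 : ZMod p) * C) = -((C : ZMod p) * (-1 - 1)) := by ring
    _ = 0 := by rw [hz]; ring
  have := (ZMod.natCast_eq_zero_iff _ p).mp h2
  have := Nat.le_of_dvd (by omega) this
  omega
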